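/- Let (X_i, φ_{ij}) be a diagram in the category of Banach spaces with linear isometries indexed by a directed set I, and let (X, φ_i) be a cocone over it (i.e., X is a Banach space, φ_i : X_i → X are linear isometries with φ_i = φ_j ∘ φ_{ij} for i ≤ j). Then (X, φ_i) is a colimit of the diagram if and only if ⋃_{i∈I} φ_i(X_i) is dense in X. -/

import Mathlib

section Aux

variable {I : Type} [Preorder I] [IsDirected I (· ≤ ·)] [Nonempty I]
  {X : I → Type} [∀ i, NormedAddCommGroup (X i)] [∀ i, NormedSpace ℝ (X i)]
  {Z : Type} [NormedAddCommGroup Z] [NormedSpace ℝ Z]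
  (φ : ∀ i j, i ≤ j → X i →ₗᵢ[ℝ] X j)
  (ψ : ∀ i, X i →ₗᵢ[ℝ] Z)

/-- The union of the ranges of a compatible family of isometries is a submodule. -/
def coconeSubmodule
    (hψ : ∀ i j (hij : i ≤ j) (x : X i), ψ j (φ i j hij x) = ψ i x) : Submodule ℝ Z where
  carrier := ⋃ i, Set.range (ψ i)
  add_mem' := by
    simp only [Set.mem_iUnion, Set.mem_range]
    rintro a b ⟨i, x, rfl⟩ ⟨j, y, rfl⟩
    obtain ⟨k, hik, hjk⟩ := directed_of (· ≤ ·) i j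
    exact ⟨k, φ i k hik x + φ j k hjk y, by simp [hψ]⟩
  zero_mem' := by
    simp only [Set.mem_iUnion, Set.mem_range]
    exact ⟨Classical.arbitrary I, 0, by simp⟩
  smul_mem' := by
    simp only [Set.mem_iUnion, Set.mem_range]
    rintro c a ⟨i, x, rfl⟩
    exact ⟨i, c • x, by simp⟩

omit [Nonempty I] in
theorem cocone_welldef {Y : Type} [NormedAddCommGroup Y] [NormedSpace ℝ Y]
    (ρ : ∀ i, X i →ₗᵢ[ℝ] Y)
    (hψ : ∀ i j (hij : i ≤ j) (x : X i), ψ j (φ i j hij x) = ψ i x)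
    (hρ : ∀ i j (hij : i ≤ j) (x : X i), ρ j (φ i j hij x) = ρ i x)
    {i j : I} {x : X i} {y : X j} (h : ψ i x = ψ j y) : ρ i x = ρ j y := by
  obtain ⟨k, hik, hjk⟩ := directed_of (· ≤ ·) i j
  have h2 : ψ k (φ i k hik x) = ψ k (φ j k hjk y) := by rw [hψ, hψ]; exact h
  have h3 : φ i k hik x = φ j k hjk y := (ψ k).injective h2
  calc ρ i x = ρ k (φ i k hik x) := (hρ i k hik x).symm
    _ = ρ k (φ j k hjk y) := by rw [h3]
    _ = ρ j y := hρ j k hjk y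

end Aux

/-- A cocone `(Z, ψ)` over a directed diagram of Banach spaces and linear isometries is a
colimit (i.e. satisfies the universal property) iff the union of the images of the cocone
maps is dense. -/
theorem stmt0 {I : Type} [Preorder I] [IsDirected I (· ≤ ·)] [Nonempty I]
    (X : I → Type) [∀ i, NormedAddCommGroup (X i)] [∀ i, NormedSpace ℝ (X i)]
    [∀ i, CompleteSpace (X i)]
    (φ : ∀ i j, i ≤ j → X i →ₗᵢ[ℝ] X j)
    (hid : ∀ i (x : X i), φ i i le_rfl x = x)
    (hcomp : ∀ i j k (hij : i ≤ j) (hjk : j ≤ k) (x : X i),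
      φ j k hjk (φ i j hij x) = φ i k (hij.trans hjk) x)
    (Z : Type) [NormedAddCommGroup Z] [NormedSpace ℝ Z] [CompleteSpace Z]
    (ψ : ∀ i, X i →ₗᵢ[ℝ] Z)
    (hψ : ∀ i j (hij : i ≤ j) (x : X i), ψ j (φ i j hij x) = ψ i x) :
    (∀ (Y : Type) [NormedAddCommGroup Y] [NormedSpace ℝ Y] [CompleteSpace Y]
      (ρ : ∀ i, X i →ₗᵢ[ℝ] Y),
      (∀ i j (hij : i ≤ j) (x : X i), ρ j (φ i j hij x) = ρ i x) →
      ∃! g : Z →ₗᵢ[ℝ] Y, ∀ i (x : X i), g (ψ i x) = ρ i x) ↔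
    Dense (⋃ i, Set.range (ψ i)) := by
  set S : Submodule ℝ Z := coconeSubmodule φ ψ hψ with hS
  have hScarrier : (S : Set Z) = ⋃ i, Set.range (ψ i) := rfl
  have hmemS : ∀ i (x : X i), ψ i x ∈ S := fun i x => by
    rw [← SetLike.mem_coe, hScarrier]
    exact Set.mem_iUnion.2 ⟨i, x, rfl⟩
  constructor
  · -- universal property → dense
    intro huniv
    set D : Submodule ℝ Z := S.topologicalClosure with hD
    have hDclosed : IsClosed (D : Set Z) := S.isClosed_topologicalClosure
    haveI : CompleteSpace D := hDclosed.completeSpace_coe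
    -- the restricted cocone
    set ρ : ∀ i, X i →ₗᵢ[ℝ] D := fun i =>
      { toLinearMap := (ψ i).toLinearMap.codRestrict D
          (fun x => S.le_topologicalClosure (hmemS i x)),
        norm_map' := fun x => (ψ i).norm_map x } with hρdef
    have hρ : ∀ i j (hij : i ≤ j) (x : X i), ρ j (φ i j hij x) = ρ i x := by
      intro i j hij x
      apply Subtype.ext
      exact hψ i j hij x
    obtain ⟨g, hg, -⟩ := huniv D ρ hρ
    obtain ⟨g', -, hg'uniq⟩ := huniv Z ψ (fun i j hij x => hψ i j hij x)
    have h1 : D.subtypeₗᵢ.comp g = g' := by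
      apply hg'uniq
      intro i x
      show ((g (ψ i x) : D) : Z) = ψ i x
      rw [hg i x]
      rfl
    have h2 : LinearIsometry.id = g' := by
      apply hg'uniq
      intro i x
      rfl
    intro z
    have : z = (D.subtypeₗᵢ.comp g) z := by rw [h1, ← h2]; rfl
    have hzD : z ∈ D := this ▸ (g z).2
    rw [← hScarrier]
    exact S.topologicalClosure_coe ▸ hzD
  · -- dense → universal property
    intro hdense
    intro Y _ _ _ ρ hρ
    -- the map on S
    have hrep : ∀ s : S, ∃ (i : I) (x : X i), ψ i x = (s : Z) := by
      rintro ⟨s, hs⟩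
      rw [← SetLike.mem_coe, hScarrier] at hs
      obtain ⟨_, ⟨i, rfl⟩, x, hx⟩ := hs
      exact ⟨i, x, hx⟩
    classical
    set f0 : S → Y := fun s => ρ (hrep s).choose (hrep s).choose_spec.choose with hf0
    have hf0spec : ∀ s : S, ψ (hrep s).choose (hrep s).choose_spec.choose = (s : Z) :=
      fun s => (hrep s).choose_spec.choose_spec
    have hf0eq : ∀ (s : S) (i : I) (x : X i), ψ i x = (s : Z) → f0 s = ρ i x := by
      intro s i x hx
      exact cocone_welldef φ ψ ρ hψ hρ (by rw [hf0spec s, hx])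
    have hf0add : ∀ a b : S, f0 (a + b) = f0 a + f0 b := by
      intro a b
      obtain ⟨i, x, hx⟩ := hrep a
      obtain ⟨j, y, hy⟩ := hrep b
      obtain ⟨k, hik, hjk⟩ := directed_of (· ≤ ·) i j
      have hxy : ψ k (φ i k hik x + φ j k hjk y) = ((a + b : S) : Z) := by
        simp [hψ, hx, hy]
      rw [hf0eq _ _ _ hxy, hf0eq a i x hx, hf0eq b j y hy,
        ← hρ i k hik x, ← hρ j k hjk y, map_add]
    have hf0smul : ∀ (c : ℝ) (a : S), f0 (c • a) = c • f0 a := by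
      intro c a
      obtain ⟨i, x, hx⟩ := hrep a
      have : ψ i (c • x) = ((c • a : S) : Z) := by simp [hx]
      rw [hf0eq _ _ _ this, hf0eq a i x hx, map_smul]
    have hf0norm : ∀ a : S, ‖f0 a‖ = ‖a‖ := by
      intro a
      obtain ⟨i, x, hx⟩ := hrep a
      rw [hf0eq a i x hx, (ρ i).norm_map]
      have : ‖(a : Z)‖ = ‖a‖ := rfl
      rw [← this, ← hx, (ψ i).norm_map]
    set f : S →ₗᵢ[ℝ] Y :=
      { toFun := f0, map_add' := hf0add, map_smul' := hf0smul, norm_map' := hf0norm } with hf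
    -- extend along the dense inclusion
    have hdr : DenseRange (S.subtypeL : S →L[ℝ] Z) := by
      have : Set.range (S.subtypeL : S →L[ℝ] Z) = (S : Set Z) := Subtype.range_coe
      rw [DenseRange, this, hScarrier]
      exact hdense
    have hui : IsUniformInducing (S.subtypeL : S →L[ℝ] Z) :=
      isometry_subtype_coe.isUniformInducing
    set g0 : Z →L[ℝ] Y :=
      ContinuousLinearMap.extend f.toContinuousLinearMap S.subtypeL with hg0
    have hg0eq : ∀ s : S, g0 (s : Z) = f0 s := fun s =>
      ContinuousLinearMap.extend_eq f.toContinuousLinearMap hdr hui s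
    have hg0norm : ∀ z : Z, ‖g0 z‖ = ‖z‖ := by
      have hclosed : IsClosed {z : Z | ‖g0 z‖ = ‖z‖} :=
        isClosed_eq (continuous_norm.comp g0.continuous) continuous_norm
      have hsub : (⋃ i, Set.range (ψ i)) ⊆ {z : Z | ‖g0 z‖ = ‖z‖} := by
        rintro z hz
        rw [← hScarrier] at hz
        have : g0 z = f0 ⟨z, hz⟩ := hg0eq ⟨z, hz⟩
        simp only [Set.mem_setOf_eq, this, hf0norm]
        rfl
      have : closure (⋃ i, Set.range (ψ i)) ⊆ {z : Z | ‖g0 z‖ = ‖z‖} :=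
        hclosed.closure_subset_iff.2 hsub
      intro z
      exact this (hdense z)
    set g : Z →ₗᵢ[ℝ] Y := ⟨g0.toLinearMap, hg0norm⟩ with hgdef
    refine ⟨g, ?_, ?_⟩
    · intro i x
      have : g (ψ i x) = f0 ⟨ψ i x, hmemS i x⟩ := hg0eq ⟨ψ i x, hmemS i x⟩
      rw [this, hf0eq ⟨ψ i x, hmemS i x⟩ i x rfl]
    · intro g' hg'
      apply LinearIsometry.ext
      have heq : Set.EqOn g' g (⋃ i, Set.range (ψ i)) := by
        rintro z ⟨_, ⟨i, rfl⟩, x, rfl⟩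
        have h1 : g' (ψ i x) = ρ i x := hg' i x
        have h2 : g (ψ i x) = f0 ⟨ψ i x, hmemS i x⟩ := hg0eq ⟨ψ i x, hmemS i x⟩
        rw [h1, h2, hf0eq ⟨ψ i x, hmemS i x⟩ i x rfl]
      exact fun z => Continuous.ext_on hdense g'.continuous g.continuous heq ▸ rfl
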